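/- arXiv:1806.07190 — 5 statements merged into one kernel-verified Lean document; each statement's English description precedes it below -/
import Mathlib

section
/- Under the stated hypotheses, for every ε with 0 < ε < min{k_{p1}/h₂, h₁/h₂}, the Lyapunov candidate V is positive definite and radially unbounded: V(0, 0) = 0, V(ė, e) > 0 for all (ė, e) ≠ (0, 0), and for every M ∈ ℝ there exists R > 0 such that V(ė, e) > M whenever ‖ė‖² + ‖e‖² > R². -/
/-!
With `c = ½ min(h₁ - ε h₂, k_{p1} - ε h₂) > 0` one has `V(ė, e) ≥ c (‖ė‖² + ‖e‖²)`, from which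
both positivity and radial unboundedness follow. The kinetic term and the integral term give
`½ h₁ ‖ė‖²` and `½ k_{p1} ‖e‖²`; the cross term is controlled by positive semidefiniteness of
`Ĥ` applied to `e + ė`, which yields `2 eᵀĤė ≥ -(eᵀĤe + ėᵀĤė) ≥ -h₂ (‖e‖² + ‖ė‖²)`.
-/

open Matrix

/-- The Lyapunov candidate `V(ė, e)` from the paper, with the line integral
parametrized along the straight path from `0` to `e`. -/
noncomputable def lyapV (n : ℕ)
    (H Kp : EuclideanSpace ℝ (Fin n) → Matrix (Fin n) (Fin n) ℝ)
    (qd : EuclideanSpace ℝ (Fin n)) (ε : ℝ)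
    (ed e : EuclideanSpace ℝ (Fin n)) : ℝ :=
  (1 / 2) * (ed ⬝ᵥ (H (qd + e)).mulVec ed)
    + (∫ t in (0:ℝ)..1, t * (e ⬝ᵥ (Kp (t • e + qd)).mulVec e))
    + ε * (e ⬝ᵥ (H (qd + e)).mulVec ed)

theorem Matrix.IsSymm.add_dotProduct_mulVec_add {ι R : Type*} [Fintype ι] [CommSemiring R]
    {A : Matrix ι ι R} (hA : A.IsSymm) (x y : ι → R) :
    (x + y) ⬝ᵥ A *ᵥ (x + y) = x ⬝ᵥ A *ᵥ x + 2 * (x ⬝ᵥ A *ᵥ y) + y ⬝ᵥ A *ᵥ y := by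
  have hswap : y ⬝ᵥ A *ᵥ x = x ⬝ᵥ A *ᵥ y := by
    rw [dotProduct_mulVec, ← mulVec_transpose, hA.eq, dotProduct_comm]
  rw [mulVec_add, add_dotProduct, dotProduct_add, dotProduct_add, hswap]
  ring

theorem half_mul_le_integral_mul_of_le {f : ℝ → ℝ} (hf : Continuous f) {c : ℝ}
    (hc : ∀ t ∈ Set.Icc (0 : ℝ) 1, c ≤ f t) :
    c / 2 ≤ ∫ t in (0 : ℝ)..1, t * f t := by
  calc c / 2 = ∫ t in (0 : ℝ)..1, t * c := by
        rw [intervalIntegral.integral_mul_const, integral_id]; ring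
    _ ≤ ∫ t in (0 : ℝ)..1, t * f t :=
        intervalIntegral.integral_mono_on zero_le_one
          ((continuous_id.mul continuous_const).intervalIntegrable _ _)
          ((continuous_id.mul hf).intervalIntegrable _ _)
          fun t ht => mul_le_mul_of_nonneg_left (hc t ht) ht.1

section LowerBound

variable {n : ℕ} {H Kp : EuclideanSpace ℝ (Fin n) → Matrix (Fin n) (Fin n) ℝ}
  {h1 h2 kp1 ε : ℝ}

theorem lyapV_lower_bound (hKcont : Continuous Kp) (hHsymm : ∀ q, (H q).IsSymm)
    (hh1 : 0 ≤ h1) (hε : 0 ≤ ε)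
    (hHlow : ∀ q x : EuclideanSpace ℝ (Fin n), h1 * ‖x‖ ^ 2 ≤ x ⬝ᵥ (H q).mulVec x)
    (hHup : ∀ q x : EuclideanSpace ℝ (Fin n), x ⬝ᵥ (H q).mulVec x ≤ h2 * ‖x‖ ^ 2)
    (hKlow : ∀ q x : EuclideanSpace ℝ (Fin n), kp1 * ‖x‖ ^ 2 ≤ x ⬝ᵥ (Kp q).mulVec x)
    (qd ed e : EuclideanSpace ℝ (Fin n)) :
    ((h1 - ε * h2) * ‖ed‖ ^ 2 + (kp1 - ε * h2) * ‖e‖ ^ 2) / 2 ≤ lyapV n H Kp qd ε ed e := by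
  set A := H (qd + e)
  have hkin : h1 * ‖ed‖ ^ 2 ≤ ed ⬝ᵥ A *ᵥ ed := hHlow _ ed
  have hpot : kp1 * ‖e‖ ^ 2 / 2 ≤ ∫ t in (0 : ℝ)..1, t * (e ⬝ᵥ Kp (t • e + qd) *ᵥ e) :=
    half_mul_le_integral_mul_of_le
      (continuous_const.dotProduct
        ((hKcont.comp (by fun_prop)).matrix_mulVec continuous_const))
      fun t _ => hKlow _ e
  have hcross : -(h2 * ‖e‖ ^ 2 + h2 * ‖ed‖ ^ 2) ≤ 2 * (e ⬝ᵥ A *ᵥ ed) := by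
    have hsum : 0 ≤ (e + ed : EuclideanSpace ℝ (Fin n)) ⬝ᵥ A *ᵥ (e + ed) :=
      (mul_nonneg hh1 (sq_nonneg _)).trans (hHlow _ _)
    rw [WithLp.ofLp_add, (hHsymm _).add_dotProduct_mulVec_add] at hsum
    linarith [hHup (qd + e) e, hHup (qd + e) ed]
  unfold lyapV
  linarith [mul_le_mul_of_nonneg_left hcross hε]

theorem lyapV_ge_min_mul (hKcont : Continuous Kp) (hHsymm : ∀ q, (H q).IsSymm)
    (hh1 : 0 ≤ h1) (hε : 0 ≤ ε)
    (hHlow : ∀ q x : EuclideanSpace ℝ (Fin n), h1 * ‖x‖ ^ 2 ≤ x ⬝ᵥ (H q).mulVec x)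
    (hHup : ∀ q x : EuclideanSpace ℝ (Fin n), x ⬝ᵥ (H q).mulVec x ≤ h2 * ‖x‖ ^ 2)
    (hKlow : ∀ q x : EuclideanSpace ℝ (Fin n), kp1 * ‖x‖ ^ 2 ≤ x ⬝ᵥ (Kp q).mulVec x)
    (qd ed e : EuclideanSpace ℝ (Fin n)) :
    min (h1 - ε * h2) (kp1 - ε * h2) / 2 * (‖ed‖ ^ 2 + ‖e‖ ^ 2)
      ≤ lyapV n H Kp qd ε ed e := by
  have := lyapV_lower_bound hKcont hHsymm hh1 hε hHlow hHup hKlow qd ed e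
  nlinarith [min_le_left (h1 - ε * h2) (kp1 - ε * h2), min_le_right (h1 - ε * h2) (kp1 - ε * h2),
    sq_nonneg ‖ed‖, sq_nonneg ‖e‖]

end LowerBound

section QuadraticLowerBound

variable {E F : Type*} [NormedAddCommGroup E] [NormedAddCommGroup F] {V : E → F → ℝ} {c : ℝ}

theorem pos_of_mul_sq_add_sq_le (hc : 0 < c) (hV : ∀ x y, c * (‖x‖ ^ 2 + ‖y‖ ^ 2) ≤ V x y)
    {x : E} {y : F} (hxy : (x, y) ≠ (0, 0)) : 0 < V x y := by
  have hnorm : 0 < ‖x‖ ^ 2 + ‖y‖ ^ 2 := by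
    by_cases hx : x = 0
    · have hy : y ≠ 0 := fun hy => hxy (by rw [hx, hy])
      positivity
    · positivity
  exact (mul_pos hc hnorm).trans_le (hV x y)

theorem exists_radius_lt_of_mul_sq_add_sq_le (hc : 0 < c)
    (hV : ∀ x y, c * (‖x‖ ^ 2 + ‖y‖ ^ 2) ≤ V x y) (M : ℝ) :
    ∃ R > (0 : ℝ), ∀ x y, ‖x‖ ^ 2 + ‖y‖ ^ 2 > R ^ 2 → V x y > M := by
  refine ⟨max (M / c) 1, by positivity, fun x y hR => ?_⟩
  have hR1 : 1 ≤ max (M / c) 1 := le_max_right _ _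
  have hMR : M / c ≤ max (M / c) 1 ^ 2 := by nlinarith [le_max_left (M / c) 1]
  calc M = c * (M / c) := by field_simp
    _ < c * (‖x‖ ^ 2 + ‖y‖ ^ 2) := mul_lt_mul_of_pos_left (hMR.trans_lt hR) hc
    _ ≤ V x y := hV x y

end QuadraticLowerBound

theorem stmt_5_general (n : ℕ)
    (H Kp : EuclideanSpace ℝ (Fin n) → Matrix (Fin n) (Fin n) ℝ)
    (hKcont : Continuous Kp)
    (hHsymm : ∀ q, (H q).IsSymm)
    (h1 h2 kp1 : ℝ)
    (hh2 : 0 < h2)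
    (hHlow : ∀ q x : EuclideanSpace ℝ (Fin n), h1 * ‖x‖ ^ 2 ≤ x ⬝ᵥ (H q).mulVec x)
    (hHup : ∀ q x : EuclideanSpace ℝ (Fin n), x ⬝ᵥ (H q).mulVec x ≤ h2 * ‖x‖ ^ 2)
    (hKlow : ∀ q x : EuclideanSpace ℝ (Fin n), kp1 * ‖x‖ ^ 2 ≤ x ⬝ᵥ (Kp q).mulVec x)
    (qd : EuclideanSpace ℝ (Fin n)) (ε : ℝ)
    (hε : 0 < ε) (hεlt : ε < min (kp1 / h2) (h1 / h2)) :
    lyapV n H Kp qd ε 0 0 = 0 ∧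
    (∀ ed e : EuclideanSpace ℝ (Fin n), (ed, e) ≠ (0, 0) → 0 < lyapV n H Kp qd ε ed e) ∧
    (∀ M : ℝ, ∃ R > (0:ℝ), ∀ ed e : EuclideanSpace ℝ (Fin n),
      ‖ed‖ ^ 2 + ‖e‖ ^ 2 > R ^ 2 → lyapV n H Kp qd ε ed e > M) := by
  rw [lt_min_iff, lt_div_iff₀ hh2, lt_div_iff₀ hh2] at hεlt
  have hh1 : 0 ≤ h1 := by nlinarith
  have hc : 0 < min (h1 - ε * h2) (kp1 - ε * h2) / 2 := by
    have := lt_min (sub_pos.2 hεlt.2) (sub_pos.2 hεlt.1)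
    positivity
  have hV := lyapV_ge_min_mul (qd := qd) hKcont hHsymm hh1 hε.le hHlow hHup hKlow
  refine ⟨?_, fun ed e => pos_of_mul_sq_add_sq_le hc hV,
    exists_radius_lt_of_mul_sq_add_sq_le hc hV⟩
  simp [lyapV]

theorem stmt_5 (n : ℕ) (hn : 1 ≤ n)
    (H Kp : EuclideanSpace ℝ (Fin n) → Matrix (Fin n) (Fin n) ℝ)
    (hHcont : Continuous H) (hKcont : Continuous Kp)
    (hHsymm : ∀ q, (H q).IsSymm) (hKsymm : ∀ q, (Kp q).IsSymm)
    (h1 h2 kp1 kp2 : ℝ)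
    (hh1 : 0 < h1) (hh2 : 0 < h2) (hkp1 : 0 < kp1) (hkp2 : 0 < kp2)
    (hHlow : ∀ q x : EuclideanSpace ℝ (Fin n), h1 * ‖x‖ ^ 2 ≤ x ⬝ᵥ (H q).mulVec x)
    (hHup : ∀ q x : EuclideanSpace ℝ (Fin n), x ⬝ᵥ (H q).mulVec x ≤ h2 * ‖x‖ ^ 2)
    (hKlow : ∀ q x : EuclideanSpace ℝ (Fin n), kp1 * ‖x‖ ^ 2 ≤ x ⬝ᵥ (Kp q).mulVec x)
    (hKup : ∀ q x : EuclideanSpace ℝ (Fin n), x ⬝ᵥ (Kp q).mulVec x ≤ kp2 * ‖x‖ ^ 2)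
    (qd : EuclideanSpace ℝ (Fin n)) (ε : ℝ)
    (hε : 0 < ε) (hεlt : ε < min (kp1 / h2) (h1 / h2)) :
    lyapV n H Kp qd ε 0 0 = 0 ∧
    (∀ ed e : EuclideanSpace ℝ (Fin n), (ed, e) ≠ (0, 0) → 0 < lyapV n H Kp qd ε ed e) ∧
    (∀ M : ℝ, ∃ R > (0:ℝ), ∀ ed e : EuclideanSpace ℝ (Fin n),
      ‖ed‖ ^ 2 + ‖e‖ ^ 2 > R ^ 2 → lyapV n H Kp qd ε ed e > M) :=
  stmt_5_general n H Kp hKcont hHsymm h1 h2 kp1 hh2 hHlow hHup hKlow qd ε hε hεlt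
end

section
/- For all real symmetric positive definite n×n matrices K_d, K_p, Ĥ and every real n×n matrix Ĉ, there exists ε > 0 such that the symmetric 2n×2n block matrix M with blocks M₁₁ = −K_d + εĤ, M₁₂ = (ε/2)(−K_dᵀ + Ĉ), M₂₁ = (ε/2)(−K_d + Ĉᵀ), M₂₂ = −εK_p is negative definite, i.e. xᵀMx < 0 for all nonzero x ∈ ℝ^{2n}. -/
/-!
The block matrix is `M₀ + ε M₁` with `M₀ = diag(-K_d, 0)`. Writing `x = (u, v)`, the form of `M₀`
is nonpositive and vanishes only when `u = 0`, and there the form of `M₁` is `-vᵀ K_p v < 0`.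
A compactness argument on the unit sphere turns this into negative definiteness of `M₀ + ε M₁`
for small `ε > 0`.
-/

open Matrix

namespace Matrix

section Quadratic

variable {ι : Type*} [Fintype ι]

lemma continuous_dotProduct_mulVec_self (M : Matrix ι ι ℝ) :
    Continuous fun x : ι → ℝ => x ⬝ᵥ M *ᵥ x :=
  continuous_id.dotProduct (continuous_const.matrix_mulVec continuous_id)

lemma smul_dotProduct_mulVec_smul (M : Matrix ι ι ℝ) (c : ℝ) (x : ι → ℝ) :
    (c • x) ⬝ᵥ M *ᵥ (c • x) = c ^ 2 * (x ⬝ᵥ M *ᵥ x) := by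
  rw [mulVec_smul, smul_dotProduct, dotProduct_smul, smul_eq_mul, smul_eq_mul]
  ring

lemma dotProduct_add_smul_mulVec (M₀ M₁ : Matrix ι ι ℝ) (ε : ℝ) (x : ι → ℝ) :
    x ⬝ᵥ (M₀ + ε • M₁) *ᵥ x = x ⬝ᵥ M₀ *ᵥ x + ε * (x ⬝ᵥ M₁ *ᵥ x) := by
  rw [add_mulVec, smul_mulVec, dotProduct_add, dotProduct_smul, smul_eq_mul]

lemma dotProduct_mulVec_neg_of_forall_sphere {M : Matrix ι ι ℝ}
    (hM : ∀ x ∈ Metric.sphere (0 : ι → ℝ) 1, x ⬝ᵥ M *ᵥ x < 0) {x : ι → ℝ} (hx : x ≠ 0) :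
    x ⬝ᵥ M *ᵥ x < 0 := by
  have hnorm : 0 < ‖x‖ := norm_pos_iff.mpr hx
  have hunit : ‖x‖⁻¹ • x ∈ Metric.sphere (0 : ι → ℝ) 1 := by
    rw [mem_sphere_zero_iff_norm, norm_smul, norm_inv, norm_norm, inv_mul_cancel₀ hnorm.ne']
  have hx_eq : x = ‖x‖ • (‖x‖⁻¹ • x) := by rw [smul_smul, mul_inv_cancel₀ hnorm.ne', one_smul]
  rw [hx_eq, smul_dotProduct_mulVec_smul]
  exact mul_neg_of_pos_of_neg (by positivity) (hM _ hunit)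

/-- On the compact set of unit vectors where `M₁` is nonnegative, `M₀` is bounded away from `0`
by the hypotheses, so a small multiple of the bounded form of `M₁` cannot compensate it;
elsewhere both forms are already of the right sign. -/
theorem exists_pos_forall_dotProduct_add_smul_mulVec_neg (M₀ M₁ : Matrix ι ι ℝ)
    (h₀ : ∀ x, x ⬝ᵥ M₀ *ᵥ x ≤ 0) (h₁ : ∀ x ≠ 0, x ⬝ᵥ M₀ *ᵥ x = 0 → x ⬝ᵥ M₁ *ᵥ x < 0) :
    ∃ ε > (0 : ℝ), ∀ x ≠ 0, x ⬝ᵥ (M₀ + ε • M₁) *ᵥ x < 0 := by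
  set S := Metric.sphere (0 : ι → ℝ) 1
  have hS : IsCompact S := isCompact_sphere 0 1
  have hK : IsCompact (S ∩ {x | 0 ≤ x ⬝ᵥ M₁ *ᵥ x}) :=
    hS.inter_right (isClosed_le continuous_const (continuous_dotProduct_mulVec_self M₁))
  obtain ⟨m, hm, hm_le⟩ := hK.exists_forall_le' (a := 0) (f := fun x => -(x ⬝ᵥ M₀ *ᵥ x))
    (continuous_dotProduct_mulVec_self M₀).neg.continuousOn fun x ⟨hxS, hx₁⟩ => by
      have hx : x ≠ 0 := Metric.ne_of_mem_sphere hxS one_ne_zero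
      exact neg_pos.mpr <| (h₀ x).lt_of_ne fun h => (h₁ x hx h).not_ge hx₁
  obtain ⟨C, hC⟩ := hS.bddAbove_image (continuous_dotProduct_mulVec_self M₁).continuousOn
  set C' := max C 1
  have hC' : 0 < C' := lt_max_of_lt_right one_pos
  have hε : 0 < m / (2 * C') := by positivity
  refine ⟨m / (2 * C'), hε, fun x hx => dotProduct_mulVec_neg_of_forall_sphere
    (fun y hy => ?_) hx⟩
  rw [dotProduct_add_smul_mulVec]
  rcases lt_or_ge (y ⬝ᵥ M₁ *ᵥ y) 0 with hy₁ | hy₁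
  · exact add_neg_of_nonpos_of_neg (h₀ y) (mul_neg_of_pos_of_neg hε hy₁)
  · have hy₀ : m ≤ -(y ⬝ᵥ M₀ *ᵥ y) := hm_le y ⟨hy, hy₁⟩
    have hy₁C : y ⬝ᵥ M₁ *ᵥ y ≤ C' := (hC ⟨y, hy, rfl⟩).trans (le_max_left _ _)
    have : m / (2 * C') * (y ⬝ᵥ M₁ *ᵥ y) ≤ m / 2 :=
      calc m / (2 * C') * (y ⬝ᵥ M₁ *ᵥ y) ≤ m / (2 * C') * C' := by gcongr
        _ = m / 2 := by field_simp
    linarith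

end Quadratic

lemma dotProduct_fromBlocks_mulVec {m n : Type*} [Fintype m] [Fintype n] {R : Type*}
    [NonUnitalNonAssocSemiring R] (A : Matrix m m R) (B : Matrix m n R) (C : Matrix n m R) (D : Matrix n n R)
    (x : m ⊕ n → R) :
    x ⬝ᵥ fromBlocks A B C D *ᵥ x =
      x ∘ Sum.inl ⬝ᵥ A *ᵥ (x ∘ Sum.inl) + x ∘ Sum.inl ⬝ᵥ B *ᵥ (x ∘ Sum.inr) +
        (x ∘ Sum.inr ⬝ᵥ C *ᵥ (x ∘ Sum.inl) + x ∘ Sum.inr ⬝ᵥ D *ᵥ (x ∘ Sum.inr)) := by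
  conv_lhs => rw [← Sum.elim_comp_inl_inr x]
  rw [fromBlocks_mulVec, sumElim_dotProduct_sumElim, dotProduct_add, dotProduct_add,
    Sum.elim_comp_inl, Sum.elim_comp_inr]

end Matrix

theorem stmt_9_general (n : ℕ)
    (Kd Kp Hh Ch : Matrix (Fin n) (Fin n) ℝ)
    (hKd : Kd.PosDef) (hKp : Kp.PosDef) :
    ∃ ε > (0:ℝ), ∀ x : (Fin n ⊕ Fin n) → ℝ, x ≠ 0 →
      x ⬝ᵥ (Matrix.fromBlocks (-Kd + ε • Hh) ((ε / 2) • (-Kdᵀ + Ch))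
        ((ε / 2) • (-Kd + Chᵀ)) (-(ε • Kp))).mulVec x < 0 := by
  set M₀ : Matrix (Fin n ⊕ Fin n) (Fin n ⊕ Fin n) ℝ := fromBlocks (-Kd) 0 0 0
  set M₁ : Matrix (Fin n ⊕ Fin n) (Fin n ⊕ Fin n) ℝ :=
    fromBlocks Hh ((1 / 2 : ℝ) • (-Kdᵀ + Ch)) ((1 / 2 : ℝ) • (-Kd + Chᵀ)) (-Kp)
  have hq₀ : ∀ x, x ⬝ᵥ M₀ *ᵥ x = -(x ∘ Sum.inl ⬝ᵥ Kd *ᵥ (x ∘ Sum.inl)) := fun x => by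
    simp [M₀, dotProduct_fromBlocks_mulVec, neg_mulVec]
  have hM₀ : ∀ x, x ⬝ᵥ M₀ *ᵥ x ≤ 0 := fun x => by
    simpa [hq₀] using hKd.posSemidef.dotProduct_mulVec_nonneg (x ∘ Sum.inl)
  have hM₁ : ∀ x ≠ 0, x ⬝ᵥ M₀ *ᵥ x = 0 → x ⬝ᵥ M₁ *ᵥ x < 0 := by
    intro x hx hx₀
    have hu : x ∘ Sum.inl = 0 := by
      by_contra hu
      have hpos := hKd.dotProduct_mulVec_pos hu
      rw [hq₀] at hx₀
      rw [star_trivial] at hpos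
      linarith
    have hv : x ∘ Sum.inr ≠ 0 := fun hv => hx <| by
      rw [← Sum.elim_comp_inl_inr x, hu, hv]; ext (i | i) <;> rfl
    simpa [M₁, dotProduct_fromBlocks_mulVec, neg_mulVec, hu] using hKp.dotProduct_mulVec_pos hv
  obtain ⟨ε, hε, hneg⟩ := exists_pos_forall_dotProduct_add_smul_mulVec_neg M₀ M₁ hM₀ hM₁
  refine ⟨ε, hε, fun x hx => ?_⟩
  convert hneg x hx using 3
  simp only [M₀, M₁, fromBlocks_smul, fromBlocks_add, smul_smul, mul_one_div, zero_add, smul_neg]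

theorem stmt_9 (n : ℕ) (hn : 1 ≤ n)
    (Kd Kp Hh Ch : Matrix (Fin n) (Fin n) ℝ)
    (hKd : Kd.PosDef) (hKp : Kp.PosDef) (hHh : Hh.PosDef) :
    ∃ ε > (0:ℝ), ∀ x : (Fin n ⊕ Fin n) → ℝ, x ≠ 0 →
      x ⬝ᵥ (Matrix.fromBlocks (-Kd + ε • Hh) ((ε / 2) • (-Kdᵀ + Ch))
        ((ε / 2) • (-Kd + Chᵀ)) (-(ε • Kp))).mulVec x < 0 :=
  stmt_9_general n Kd Kp Hh Ch hKd hKp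
end

section
/- For all real symmetric positive definite n×n matrices K_d, K_p, Ĥ and every real n×n matrix Ĉ, there exists ε₀ > 0 such that for every ε with 0 < ε < ε₀: the matrix K_d − εĤ is positive definite (hence invertible), and the Schur complement S = −εK_p + (ε²/4)(K_d − Ĉᵀ)(K_d − εĤ)⁻¹(K_dᵀ − Ĉ) is negative definite, i.e. xᵀSx < 0 for all nonzero x ∈ ℝⁿ. -/
/-!
By compactness of the unit sphere, `cd ‖x‖² ≤ xᵀ K_d x`, `cp ‖x‖² ≤ xᵀ K_p x`,
`xᵀ Ĥ x ≤ C_H ‖x‖²` and `‖(K_dᵀ - Ĉ) x‖² ≤ C_M ‖x‖²`. For `ε C_H < cd / 2` this gives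
`(cd / 2) ‖x‖² ≤ xᵀ (K_d - ε Ĥ) x`, hence positive definiteness and
`yᵀ (K_d - ε Ĥ)⁻¹ y ≤ (2 / cd) ‖y‖²`. The quadratic form of the Schur complement is then at most
`-ε cp ‖x‖² + ε² C_M / (2 cd) ‖x‖²`: the `O(ε)` negative term wins once `ε C_M < 2 cp cd`.
-/

open Matrix

namespace Matrix

variable {ι : Type*} [Fintype ι]

lemma dotProduct_self_nonneg (x : ι → ℝ) : 0 ≤ x ⬝ᵥ x :=
  Finset.sum_nonneg fun i _ => mul_self_nonneg (x i)

lemma dotProduct_self_pos {x : ι → ℝ} (hx : x ≠ 0) : 0 < x ⬝ᵥ x :=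
  (dotProduct_self_nonneg x).lt_of_ne' (dotProduct_self_eq_zero.not.mpr hx)

lemma dotProduct_mulVec_div_dotProduct_self_smul (A : Matrix ι ι ℝ) (x : ι → ℝ) {t : ℝ}
    (ht : t ≠ 0) :
    (t • x) ⬝ᵥ A *ᵥ (t • x) / ((t • x) ⬝ᵥ (t • x)) = x ⬝ᵥ A *ᵥ x / (x ⬝ᵥ x) := by
  simp only [mulVec_smul, smul_dotProduct, dotProduct_smul, smul_eq_mul]
  rw [← mul_assoc, ← mul_assoc, mul_div_mul_left _ _ (mul_ne_zero ht ht)]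

/-- The Rayleigh quotient `x ⬝ᵥ A *ᵥ x / (x ⬝ᵥ x)` is scale invariant, so its minimum over a
sphere is a global lower bound. -/
lemma exists_ne_zero_forall_mul_dotProduct_self_le [Nonempty ι] (A : Matrix ι ι ℝ) :
    ∃ x₀ : ι → ℝ, x₀ ≠ 0 ∧
      ∀ x, x₀ ⬝ᵥ A *ᵥ x₀ / (x₀ ⬝ᵥ x₀) * (x ⬝ᵥ x) ≤ x ⬝ᵥ A *ᵥ x := by
  have hcont : ContinuousOn (fun x : ι → ℝ => x ⬝ᵥ A *ᵥ x / (x ⬝ᵥ x)) (Metric.sphere 0 1) := by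
    refine ContinuousOn.div (by fun_prop) (by fun_prop) fun x hx => ?_
    rw [Ne, dotProduct_self_eq_zero]
    rintro rfl
    simp at hx
  obtain ⟨x₀, hx₀, hmin⟩ := (isCompact_sphere (0 : ι → ℝ) 1).exists_isMinOn
    (NormedSpace.sphere_nonempty.mpr zero_le_one) hcont
  have hx₀ne : x₀ ≠ 0 := by rintro rfl; simp at hx₀
  refine ⟨x₀, hx₀ne, fun x => ?_⟩
  rcases eq_or_ne x 0 with rfl | hx
  · simp
  have hxx := dotProduct_self_pos hx
  have hnorm : ‖x‖⁻¹ • x ∈ Metric.sphere (0 : ι → ℝ) 1 := by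
    simp [norm_smul, inv_mul_cancel₀ (norm_ne_zero_iff.mpr hx)]
  have hle := isMinOn_iff.mp hmin _ hnorm
  rw [dotProduct_mulVec_div_dotProduct_self_smul A x (inv_ne_zero (norm_ne_zero_iff.mpr hx))]
    at hle
  rwa [← le_div_iff₀ hxx]

lemma PosDef.exists_pos_mul_dotProduct_self_le {A : Matrix ι ι ℝ} (hA : A.PosDef) :
    ∃ c > 0, ∀ x, c * (x ⬝ᵥ x) ≤ x ⬝ᵥ A *ᵥ x := by
  cases isEmpty_or_nonempty ι
  · exact ⟨1, one_pos, fun x => by simp [Subsingleton.elim x 0]⟩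
  obtain ⟨x₀, hx₀, hle⟩ := exists_ne_zero_forall_mul_dotProduct_self_le A
  have hpos : 0 < x₀ ⬝ᵥ A *ᵥ x₀ := by simpa using hA.dotProduct_mulVec_pos hx₀
  exact ⟨_, div_pos hpos (dotProduct_self_pos hx₀), hle⟩

lemma exists_pos_dotProduct_mulVec_le_mul_dotProduct_self (A : Matrix ι ι ℝ) :
    ∃ C > 0, ∀ x, x ⬝ᵥ A *ᵥ x ≤ C * (x ⬝ᵥ x) := by
  cases isEmpty_or_nonempty ι
  · exact ⟨1, one_pos, fun x => by simp [Subsingleton.elim x 0]⟩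
  obtain ⟨x₀, -, hle⟩ := exists_ne_zero_forall_mul_dotProduct_self_le (-A)
  set c := x₀ ⬝ᵥ (-A) *ᵥ x₀ / (x₀ ⬝ᵥ x₀)
  refine ⟨max (-c) 1, by positivity, fun x => ?_⟩
  have hxx := dotProduct_self_nonneg x
  have hx := hle x
  rw [neg_mulVec, dotProduct_neg] at hx
  nlinarith [mul_le_mul_of_nonneg_right (le_max_left (-c) 1) hxx]

lemma dotProduct_inv_mulVec_le [DecidableEq ι] {B : Matrix ι ι ℝ} (hB : IsUnit B) {c : ℝ}
    (hc : 0 < c) (hBc : ∀ x, c * (x ⬝ᵥ x) ≤ x ⬝ᵥ B *ᵥ x) (y : ι → ℝ) :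
    y ⬝ᵥ B⁻¹ *ᵥ y ≤ c⁻¹ * (y ⬝ᵥ y) := by
  set z := B⁻¹ *ᵥ y
  have hyz : y ⬝ᵥ z = z ⬝ᵥ B *ᵥ z := by
    rw [mulVec_mulVec, mul_nonsing_inv _ ((isUnit_iff_isUnit_det B).mp hB), one_mulVec,
      dotProduct_comm]
  -- `0 ≤ ‖y - c z‖²` together with `c ‖z‖² ≤ y ⬝ᵥ z` gives `c (y ⬝ᵥ z) ≤ ‖y‖²`.
  have hsq : 0 ≤ (y - c • z) ⬝ᵥ (y - c • z) := dotProduct_self_nonneg _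
  simp only [sub_dotProduct, dotProduct_sub, smul_dotProduct, dotProduct_smul, smul_eq_mul,
    dotProduct_comm z y] at hsq
  rw [le_inv_mul_iff₀ hc]
  nlinarith [hBc z]

lemma sub_mul_dotProduct_self_le_dotProduct_sub_smul_mulVec {K H : Matrix ι ι ℝ} {c C ε : ℝ}
    (hK : ∀ x, c * (x ⬝ᵥ x) ≤ x ⬝ᵥ K *ᵥ x) (hH : ∀ x, x ⬝ᵥ H *ᵥ x ≤ C * (x ⬝ᵥ x))
    (hε : 0 ≤ ε) (x : ι → ℝ) :
    (c - ε * C) * (x ⬝ᵥ x) ≤ x ⬝ᵥ (K - ε • H) *ᵥ x := by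
  rw [sub_mulVec, dotProduct_sub, smul_mulVec, dotProduct_smul, smul_eq_mul]
  nlinarith [hK x, mul_le_mul_of_nonneg_left (hH x) hε]

lemma dotProduct_transpose_mul_mul_mulVec (M N : Matrix ι ι ℝ) (x : ι → ℝ) :
    x ⬝ᵥ (Mᵀ * N * M) *ᵥ x = (M *ᵥ x) ⬝ᵥ N *ᵥ (M *ᵥ x) := by
  rw [← mulVec_mulVec, ← mulVec_mulVec, dotProduct_mulVec x Mᵀ, vecMul_transpose]

end Matrix

theorem stmt_10_general (n : ℕ)
    (Kd Kp Hh Ch : Matrix (Fin n) (Fin n) ℝ)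
    (hKd : Kd.PosDef) (hKp : Kp.PosDef) (hHh : Hh.PosDef) :
    ∃ ε₀ > (0:ℝ), ∀ ε : ℝ, 0 < ε → ε < ε₀ →
      (Kd - ε • Hh).PosDef ∧
      ∀ x : Fin n → ℝ, x ≠ 0 →
        x ⬝ᵥ (-(ε • Kp)
          + (ε ^ 2 / 4) • ((Kd - Chᵀ) * (Kd - ε • Hh)⁻¹ * (Kdᵀ - Ch))).mulVec x < 0 := by
  set M := Kdᵀ - Ch
  obtain ⟨cd, hcd, hKd'⟩ := hKd.exists_pos_mul_dotProduct_self_le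
  obtain ⟨cp, hcp, hKp'⟩ := hKp.exists_pos_mul_dotProduct_self_le
  obtain ⟨CH, hCH, hHh'⟩ := exists_pos_dotProduct_mulVec_le_mul_dotProduct_self Hh
  obtain ⟨CM, hCM, hM'⟩ := exists_pos_dotProduct_mulVec_le_mul_dotProduct_self (Mᵀ * M)
  refine ⟨min (cd / (2 * CH)) (2 * cp * cd / CM), by positivity, fun ε hε hε₀ => ?_⟩
  have hεH : ε * CH < cd / 2 := by
    have := (lt_min_iff.mp hε₀).1; rw [lt_div_iff₀ (by positivity)] at this; linarith
  have hεM : ε * CM < 2 * cp * cd := (lt_div_iff₀ hCM).mp (lt_min_iff.mp hε₀).2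
  have hB : ∀ x, cd / 2 * (x ⬝ᵥ x) ≤ x ⬝ᵥ (Kd - ε • Hh) *ᵥ x := fun x =>
    le_trans (mul_le_mul_of_nonneg_right (by linarith) (dotProduct_self_nonneg x))
      (sub_mul_dotProduct_self_le_dotProduct_sub_smul_mulVec hKd' hHh' hε.le x)
  have hBpd : (Kd - ε • Hh).PosDef := by
    refine .of_dotProduct_mulVec_pos (hKd.isHermitian.sub (hHh.isHermitian.smul ?_)) fun x hx => ?_
    · exact .all ε
    · simpa using (mul_pos (half_pos hcd) (dotProduct_self_pos hx)).trans_le (hB x)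
  refine ⟨hBpd, fun x hx => ?_⟩
  have hInv := dotProduct_inv_mulVec_le hBpd.isUnit (half_pos hcd) hB (M *ᵥ x)
  rw [← dotProduct_transpose_mul_mul_mulVec] at hInv
  have hMx := hM' x
  rw [← mul_one Mᵀ, dotProduct_transpose_mul_mul_mulVec, one_mulVec] at hMx
  have hxx := dotProduct_self_pos hx
  rw [show Kd - Chᵀ = Mᵀ by simp [M]]
  simp only [add_mulVec, dotProduct_add, neg_mulVec, dotProduct_neg, smul_mulVec, dotProduct_smul,
    smul_eq_mul]
  calc -(ε * (x ⬝ᵥ Kp *ᵥ x)) + ε ^ 2 / 4 * (x ⬝ᵥ (Mᵀ * (Kd - ε • Hh)⁻¹ * M) *ᵥ x)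
      ≤ -(ε * (cp * (x ⬝ᵥ x))) + ε ^ 2 / 4 * ((cd / 2)⁻¹ * (CM * (x ⬝ᵥ x))) := by
        gcongr
        exacts [hKp' x, hInv.trans (by gcongr)]
    _ = ε * (x ⬝ᵥ x) / (2 * cd) * (ε * CM - 2 * cp * cd) := by field_simp; ring
    _ < 0 := mul_neg_of_pos_of_neg (by positivity) (by linarith)

theorem stmt_10 (n : ℕ) (hn : 1 ≤ n)
    (Kd Kp Hh Ch : Matrix (Fin n) (Fin n) ℝ)
    (hKd : Kd.PosDef) (hKp : Kp.PosDef) (hHh : Hh.PosDef) :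
    ∃ ε₀ > (0:ℝ), ∀ ε : ℝ, 0 < ε → ε < ε₀ →
      (Kd - ε • Hh).PosDef ∧
      ∀ x : Fin n → ℝ, x ≠ 0 →
        x ⬝ᵥ (-(ε • Kp)
          + (ε ^ 2 / 4) • ((Kd - Chᵀ) * (Kd - ε • Hh)⁻¹ * (Kdᵀ - Ch))).mulVec x < 0 :=
  stmt_10_general n Kd Kp Hh Ch hKd hKp hHh
end

section
/- Let h₂, k_C, q̄, Δ̄ ≥ 0, k_{p1}, k_{d1}, k_{d2} > 0, ε₂ > 0, ε > 0, and set ρ = (1 + ε₂)(k_C q̄ + k_{d2}) / (2 k_{p1}), v₁ = −ε h₂ + k_{d1} − (ε ρ / 2)(k_C q̄ + k_{d2}), v₂ = k_{p1} ε₂ / (1 + ε₂). If v₁ > 0, then for all a, b ≥ 0: (ε h₂ − k_{d1}) a² − ε k_{p1} b² + ε (k_C a + k_C q̄ + k_{d2}) a b + (a + ε b) Δ̄ ≤ −(3/4) v₁ a² − (3/4) ε v₂ b² + ε k_C a² b + Δ̄²/v₁ + ε Δ̄²/v₂. -/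
/-!
Write `c = kC qbar + kd2`. The term `ε c a b` is split by Young's inequality with the weight
`(1 + ε₂) / kp1`, which is exactly what `ρ` is calibrated for: it costs `ε ρ c / 2 · a²`, absorbed
by `kd1 - ε h2` and leaving `-v₁ a²`, and `ε kp1 / (1 + ε₂) · b²`, leaving `-ε v₂ b²`. Two more
Young inequalities trade a quarter of each of these for the model-error terms `a Δ` and `ε b Δ`.
-/

theorem mul_le_div_four_mul_sq_add_sq_div {t : ℝ} (ht : 0 < t) (x y : ℝ) :
    x * y ≤ t / 4 * x ^ 2 + y ^ 2 / t := by
  have key : t / 4 * x ^ 2 + y ^ 2 / t - x * y = (t * x - 2 * y) ^ 2 / (4 * t) := by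
    field_simp
    ring
  have : 0 ≤ (t * x - 2 * y) ^ 2 / (4 * t) := by positivity
  linarith

theorem stmt_13_general (h2 kC qbar Δ kp1 kd1 kd2 ε₂ ε : ℝ)
    (hkp1 : 0 < kp1) (hε₂ : 0 < ε₂) (hε : 0 < ε)
    (ρ v₁ v₂ : ℝ)
    (hρ : ρ = (1 + ε₂) * (kC * qbar + kd2) / (2 * kp1))
    (hv₁ : v₁ = -ε * h2 + kd1 - (ε * ρ / 2) * (kC * qbar + kd2))
    (hv₂ : v₂ = kp1 * ε₂ / (1 + ε₂))
    (hv₁pos : 0 < v₁) :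
    ∀ a b : ℝ, 0 ≤ a → 0 ≤ b →
      (ε * h2 - kd1) * a ^ 2 - ε * kp1 * b ^ 2
          + ε * (kC * a + kC * qbar + kd2) * a * b + (a + ε * b) * Δ
        ≤ -(3 / 4) * v₁ * a ^ 2 - (3 / 4) * ε * v₂ * b ^ 2 + ε * kC * a ^ 2 * b
          + Δ ^ 2 / v₁ + ε * Δ ^ 2 / v₂ := by
  intro a b _ _
  set c := kC * qbar + kd2
  have hv₂pos : 0 < v₂ := by rw [hv₂]; positivity
  have cross : c * a * b ≤ ρ / 2 * c * a ^ 2 + (kp1 - v₂) * b ^ 2 := by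
    have := mul_le_div_four_mul_sq_add_sq_div (by positivity : 0 < (1 + ε₂) / kp1) (c * a) b
    have hρc : (1 + ε₂) / kp1 / 4 * (c * a) ^ 2 = ρ / 2 * c * a ^ 2 := by
      rw [hρ]; field_simp; ring
    have hv₂b : b ^ 2 / ((1 + ε₂) / kp1) = (kp1 - v₂) * b ^ 2 := by
      rw [hv₂]; field_simp; ring
    linarith
  have young_a := mul_le_div_four_mul_sq_add_sq_div hv₁pos a Δ
  have young_b := mul_le_div_four_mul_sq_add_sq_div hv₂pos b Δ
  have hεh2 : ε * h2 - kd1 = -v₁ - ε * (ρ / 2 * c) := by rw [hv₁]; ring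
  rw [hεh2]
  linear_combination ε * cross + young_a + ε * young_b

theorem stmt_13 (h2 kC qbar Δ kp1 kd1 kd2 ε₂ ε : ℝ)
    (hh2 : 0 ≤ h2) (hkC : 0 ≤ kC) (hqbar : 0 ≤ qbar) (hΔ : 0 ≤ Δ)
    (hkp1 : 0 < kp1) (hkd1 : 0 < kd1) (hkd2 : 0 < kd2) (hε₂ : 0 < ε₂) (hε : 0 < ε)
    (ρ v₁ v₂ : ℝ)
    (hρ : ρ = (1 + ε₂) * (kC * qbar + kd2) / (2 * kp1))
    (hv₁ : v₁ = -ε * h2 + kd1 - (ε * ρ / 2) * (kC * qbar + kd2))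
    (hv₂ : v₂ = kp1 * ε₂ / (1 + ε₂))
    (hv₁pos : 0 < v₁) :
    ∀ a b : ℝ, 0 ≤ a → 0 ≤ b →
      (ε * h2 - kd1) * a ^ 2 - ε * kp1 * b ^ 2
          + ε * (kC * a + kC * qbar + kd2) * a * b + (a + ε * b) * Δ
        ≤ -(3 / 4) * v₁ * a ^ 2 - (3 / 4) * ε * v₂ * b ^ 2 + ε * kC * a ^ 2 * b
          + Δ ^ 2 / v₁ + ε * Δ ^ 2 / v₂ :=
  stmt_13_general h2 kC qbar Δ kp1 kd1 kd2 ε₂ ε hkp1 hε₂ hε ρ v₁ v₂ hρ hv₁ hv₂ hv₁pos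
end

section
/- Let v₁, v₂, k_C, h₂, k_{p2}, B ≥ 0, ε > 0, with max{ε h₂ + k_{p2}, (1 + ε) h₂} > 0 and v₁ − (4/3) ε k_C B ≥ 0, and set ξ = (2/3) · min{ε v₂, v₁ − (4/3) ε k_C B} / max{ε h₂ + k_{p2}, (1 + ε) h₂}. Then for all a ≥ 0 and all b with 0 ≤ b ≤ B: −(3/4) v₁ a² − (3/4) ε v₂ b² + ε k_C a² b ≤ −ξ · (1/2) max{ε h₂ + k_{p2}, (1 + ε) h₂} (a² + b²). -/
/-! Bounding `b` by `B` in the cubic cross term absorbs it into the `a²` coefficient, which becomes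
`v₁ - (4/3) ε k_C B ≥ 0`; both quadratic coefficients then dominate their minimum `m`, so the left
side is at most `-(3/4) m (a² + b²) ≤ -(1/3) m (a² + b²)`, and `ξ` is chosen so that the right side
is exactly `-(1/3) m (a² + b²)`. -/

theorem min_mul_add_le_mul_add_mul {R : Type*} [Ring R] [LinearOrder R] [IsOrderedRing R]
    (p q : R) {x y : R} (hx : 0 ≤ x) (hy : 0 ≤ y) :
    min p q * (x + y) ≤ p * x + q * y := by
  rw [mul_add]
  exact add_le_add (mul_le_mul_of_nonneg_right (min_le_left p q) hx)
    (mul_le_mul_of_nonneg_right (min_le_right p q) hy)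

theorem stmt_14_general (v₁ v₂ kC h2 kp2 B ε : ℝ)
    (hv₂ : 0 ≤ v₂) (hkC : 0 ≤ kC)
    (hε : 0 < ε)
    (hden : 0 < max (ε * h2 + kp2) ((1 + ε) * h2))
    (hnum : 0 ≤ v₁ - (4 / 3) * ε * kC * B)
    (ξ : ℝ)
    (hξ : ξ = (2 / 3) * min (ε * v₂) (v₁ - (4 / 3) * ε * kC * B)
      / max (ε * h2 + kp2) ((1 + ε) * h2)) :
    ∀ a b : ℝ, 0 ≤ a → 0 ≤ b → b ≤ B →
      -(3 / 4) * v₁ * a ^ 2 - (3 / 4) * ε * v₂ * b ^ 2 + ε * kC * a ^ 2 * b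
        ≤ -ξ * ((1 / 2) * max (ε * h2 + kp2) ((1 + ε) * h2) * (a ^ 2 + b ^ 2)) := by
  intro a b ha hb hbB
  set M := max (ε * h2 + kp2) ((1 + ε) * h2)
  set m := min (ε * v₂) (v₁ - (4 / 3) * ε * kC * B)
  have hm : 0 ≤ m := le_min (by positivity) hnum
  have hξM : ξ * ((1 / 2) * M) = m / 3 := by
    rw [hξ]
    field_simp
  have hcross : ε * kC * a ^ 2 * b ≤ ε * kC * a ^ 2 * B :=
    mul_le_mul_of_nonneg_left hbB (by positivity)
  have hmin := min_mul_add_le_mul_add_mul (ε * v₂) (v₁ - (4 / 3) * ε * kC * B)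
    (sq_nonneg b) (sq_nonneg a)
  have hsq : 0 ≤ m * (a ^ 2 + b ^ 2) := by positivity
  calc -(3 / 4) * v₁ * a ^ 2 - (3 / 4) * ε * v₂ * b ^ 2 + ε * kC * a ^ 2 * b
      ≤ -(3 / 4) * (ε * v₂ * b ^ 2 + (v₁ - (4 / 3) * ε * kC * B) * a ^ 2) := by linarith
    _ ≤ -(3 / 4) * (m * (b ^ 2 + a ^ 2)) := by linarith
    _ ≤ -(m / 3) * (a ^ 2 + b ^ 2) := by linarith
    _ = -ξ * ((1 / 2) * M * (a ^ 2 + b ^ 2)) := by rw [← hξM]; ring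

theorem stmt_14 (v₁ v₂ kC h2 kp2 B ε : ℝ)
    (hv₁ : 0 ≤ v₁) (hv₂ : 0 ≤ v₂) (hkC : 0 ≤ kC) (hh2 : 0 ≤ h2) (hkp2 : 0 ≤ kp2)
    (hB : 0 ≤ B) (hε : 0 < ε)
    (hden : 0 < max (ε * h2 + kp2) ((1 + ε) * h2))
    (hnum : 0 ≤ v₁ - (4 / 3) * ε * kC * B)
    (ξ : ℝ)
    (hξ : ξ = (2 / 3) * min (ε * v₂) (v₁ - (4 / 3) * ε * kC * B)
      / max (ε * h2 + kp2) ((1 + ε) * h2)) :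
    ∀ a b : ℝ, 0 ≤ a → 0 ≤ b → b ≤ B →
      -(3 / 4) * v₁ * a ^ 2 - (3 / 4) * ε * v₂ * b ^ 2 + ε * kC * a ^ 2 * b
        ≤ -ξ * ((1 / 2) * max (ε * h2 + kp2) ((1 + ε) * h2) * (a ^ 2 + b ^ 2)) :=
  stmt_14_general v₁ v₂ kC h2 kp2 B ε hv₂ hkC hε hden hnum ξ hξ
end
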